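/- In the lattice Λ₄ (defined in the context), set D001 = e₄, D010 = h₁₄ + f₁, D011 = h₂₃ + e₁, D100 = h₃₄ + e₂, D101 = h₁₂ + f₂, D110 = h₁₃ + f₃, D111 = h₂₄ + e₃, and L100 = L010 = L110 = f₁ + f₂ + f₃ − e₄, L001 = 2f₂, L101 = 2f₃, L011 = 2f₁ + f₂ − e₃, L111 = f₁ + f₄. Then L_χ ≠ 0 for each of the seven characters χ, the seven cover relations hold: 2·L100 = D100 + D101 + D110 + D111, 2·L010 = D010 + D011 + D110 + D111, 2·L001 = D001 + D011 + D101 + D111, 2·L110 = D010 + D011 + D100 + D101, 2·L101 = D001 + D011 + D100 + D110, 2·L011 = D001 + D010 + D101 + D110, 2·L111 = D001 + D010 + D100 + D111, and moreover 2·K + (D001 + D010 + D011 + D100 + D101 + D110 + D111) = f₁ + f₂ + f₃ = 3l − e₁ − e₂ − e₃. (These relations show the data define a ℤ₂³-cover X → Y₄ with 2K_X ≡ g*(f₁ + f₂ + f₃), used for the surface with canonical degree 10 and q = 2.) -/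
import Mathlib


/-- The Picard lattice of the blow-up of the projective plane at 4 points:
free abelian group with basis `l, e1, ..., e4`. -/
abbrev Lam : Type := Fin 5 → ℤ

namespace DelPezzoCover

def l : Lam := ![1, 0, 0, 0, 0]
def e1 : Lam := ![0, 1, 0, 0, 0]
def e2 : Lam := ![0, 0, 1, 0, 0]
def e3 : Lam := ![0, 0, 0, 1, 0]
def e4 : Lam := ![0, 0, 0, 0, 1]

/-- The canonical class `K = -3l + e1 + ... + e4`. -/
def K : Lam := (-3 : ℤ) • l + e1 + e2 + e3 + e4

def f1 : Lam := l - e1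
def f2 : Lam := l - e2
def f3 : Lam := l - e3
def f4 : Lam := l - e4

def h12 : Lam := l - e1 - e2
def h13 : Lam := l - e1 - e3
def h14 : Lam := l - e1 - e4
def h23 : Lam := l - e2 - e3
def h24 : Lam := l - e2 - e4
def h34 : Lam := l - e3 - e4

def D001 : Lam := e4
def D010 : Lam := h14 + f1
def D011 : Lam := h23 + e1
def D100 : Lam := h34 + e2
def D101 : Lam := h12 + f2
def D110 : Lam := h13 + f3
def D111 : Lam := h24 + e3

def L100 : Lam := f1 + f2 + f3 - e4
def L010 : Lam := f1 + f2 + f3 - e4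
def L001 : Lam := (2 : ℤ) • f2
def L110 : Lam := f1 + f2 + f3 - e4
def L101 : Lam := (2 : ℤ) • f3
def L011 : Lam := (2 : ℤ) • f1 + f2 - e3
def L111 : Lam := f1 + f4

theorem cover_data_d10_q2 :
    L100 ≠ 0 ∧
    L010 ≠ 0 ∧
    L001 ≠ 0 ∧
    L110 ≠ 0 ∧
    L101 ≠ 0 ∧
    L011 ≠ 0 ∧
    L111 ≠ 0 ∧
    (2 : ℤ) • L100 = D100 + D101 + D110 + D111 ∧
    (2 : ℤ) • L010 = D010 + D011 + D110 + D111 ∧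
    (2 : ℤ) • L001 = D001 + D011 + D101 + D111 ∧
    (2 : ℤ) • L110 = D010 + D011 + D100 + D101 ∧
    (2 : ℤ) • L101 = D001 + D011 + D100 + D110 ∧
    (2 : ℤ) • L011 = D001 + D010 + D101 + D110 ∧
    (2 : ℤ) • L111 = D001 + D010 + D100 + D111 ∧
    (2 : ℤ) • K + (D001 + D010 + D011 + D100 + D101 + D110 + D111) = f1 + f2 + f3 ∧
    f1 + f2 + f3 = (3 : ℤ) • l - e1 - e2 - e3 := by
  refine ⟨?_,?_,?_,?_,?_,?_,?_,?_,?_,?_,?_,?_,?_,?_,?_,?_⟩ <;>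
    first
    | (intro h; exact absurd (congrFun h 0) (by decide))
    | (funext i; fin_cases i <;> decide)

end DelPezzoCover
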